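/- For any finite simple connected graph G on n ≥ 2 vertices with smallest degree d_min, the algebraic modularity satisfies m(G) ≥ −d_min/(n−1); this bound is attained when G is a complete graph (clique). -/

import Mathlib

open Matrix Finset

variable {n : ℕ}

/-- The real-valued degree of a vertex. -/
noncomputable def degR (G : SimpleGraph (Fin n)) [DecidableRel G.Adj] (i : Fin n) : ℝ :=
  (G.degree i : ℝ)

/-- The volume of the graph: the sum of all degrees. -/
noncomputable def volG (G : SimpleGraph (Fin n)) [DecidableRel G.Adj] : ℝ :=
  ∑ i, degR G i

/-- The modularity matrix `M = A - d dᵀ / vol G`. -/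
noncomputable def modM (G : SimpleGraph (Fin n)) [DecidableRel G.Adj] :
    Matrix (Fin n) (Fin n) ℝ :=
  G.adjMatrix ℝ - (volG G)⁻¹ • Matrix.vecMulVec (degR G) (degR G)

/-- The algebraic modularity `m(G) = max { xᵀMx / xᵀx : x ≠ 0, xᵀ𝟙 = 0 }`. -/
noncomputable def algMod (G : SimpleGraph (Fin n)) [DecidableRel G.Adj] : ℝ :=
  sSup {r : ℝ | ∃ x : Fin n → ℝ, x ≠ 0 ∧ (∑ i, x i) = 0 ∧
    r = (x ⬝ᵥ (modM G *ᵥ x)) / (x ⬝ᵥ x)}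

/-!
Let `i` be a vertex of minimum degree `d` and `x = n eᵢ - 𝟙`, so `x ⊥ 𝟙` and `xᵀx = n (n - 1)`.
Since `A` has zero diagonal, `xᵀAx = vol - 2nd` and `dᵀx = nd - vol`, hence
`xᵀMx = -nd + t - t² / vol` with `t = vol - nd ∈ [0, vol]`, which is at least `-nd`;
dividing by `xᵀx` gives `m(G) ≥ -d / (n - 1)`.
For the clique `A = J - I` and `d = (n - 1) 𝟙`, so `xᵀMx = -xᵀx` for every `x ⊥ 𝟙`
and `m(Kₙ) = -1 = -(n - 1) / (n - 1)`.
-/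

section RealQuadraticForm

variable {ι : Type*} [Fintype ι]

theorem dotProduct_mulVec_le_sum_abs_mul (M : Matrix ι ι ℝ) (x : ι → ℝ) :
    x ⬝ᵥ (M *ᵥ x) ≤ (∑ i, ∑ j, |M i j|) * (x ⬝ᵥ x) := by
  have hsq (k : ι) : x k ^ 2 ≤ x ⬝ᵥ x := by
    simpa only [dotProduct, ← sq] using
      Finset.single_le_sum (fun i _ => sq_nonneg (x i)) (Finset.mem_univ k)
  have hentry (i j : ι) : x i * (M i j * x j) ≤ |M i j| * (x ⬝ᵥ x) := by
    have : x i * x j ≤ x ⬝ᵥ x := by nlinarith [hsq i, hsq j, sq_nonneg (x i - x j)]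
    have : -(x ⬝ᵥ x) ≤ x i * x j := by nlinarith [hsq i, hsq j, sq_nonneg (x i + x j)]
    calc x i * (M i j * x j) = M i j * (x i * x j) := by ring
      _ ≤ |M i j| * |x i * x j| := by rw [← abs_mul]; exact le_abs_self _
      _ ≤ |M i j| * (x ⬝ᵥ x) := by gcongr; exact abs_le.mpr ⟨by linarith, by linarith⟩
  calc x ⬝ᵥ (M *ᵥ x) = ∑ i, ∑ j, x i * (M i j * x j) := by
        simp only [dotProduct, mulVec, Finset.mul_sum]
    _ ≤ ∑ i, ∑ j, |M i j| * (x ⬝ᵥ x) :=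
        Finset.sum_le_sum fun i _ => Finset.sum_le_sum fun j _ => hentry i j
    _ = (∑ i, ∑ j, |M i j|) * (x ⬝ᵥ x) := by simp only [Finset.sum_mul]

theorem dotProduct_self_pos {x : ι → ℝ} (hx : x ≠ 0) : 0 < x ⬝ᵥ x := by
  simpa using (dotProduct_star_self_pos_iff (v := x)).mpr hx

theorem sq_div_le_self {t v : ℝ} (ht : 0 ≤ t) (htv : t ≤ v) : t ^ 2 / v ≤ t :=
  div_le_of_le_mul₀ (ht.trans htv) ht (by nlinarith)

end RealQuadraticForm

section Modularity

variable (G : SimpleGraph (Fin n)) [DecidableRel G.Adj]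

theorem adjMatrix_mulVec_one : G.adjMatrix ℝ *ᵥ 1 = degR G := by
  ext i; simp [degR]

theorem one_dotProduct_col_adjMatrix (i : Fin n) : 1 ⬝ᵥ (G.adjMatrix ℝ).col i = degR G i := by
  show (1 ᵥ* G.adjMatrix ℝ) i = _
  simp [degR]

theorem dotProduct_modM_mulVec (x : Fin n → ℝ) :
    x ⬝ᵥ (modM G *ᵥ x) = x ⬝ᵥ (G.adjMatrix ℝ *ᵥ x) - (degR G ⬝ᵥ x) ^ 2 / volG G := by
  simp only [modM, sub_mulVec, smul_mulVec, vecMulVec_mulVec, dotProduct_sub, dotProduct_smul,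
    MulOpposite.smul_eq_mul_unop, MulOpposite.unop_op, smul_eq_mul, dotProduct_comm x (degR G)]
  ring

theorem one_dotProduct_degR : 1 ⬝ᵥ degR G = volG G := one_dotProduct _

def centeredSingle (i : Fin n) : Fin n → ℝ := Pi.single i (n : ℝ) - 1

theorem sum_centeredSingle (i : Fin n) : ∑ j, centeredSingle i j = 0 := by
  simp [centeredSingle, Finset.sum_sub_distrib]

theorem centeredSingle_ne_zero (hn : 2 ≤ n) (i : Fin n) : centeredSingle i ≠ 0 := by
  intro h
  have : (n : ℝ) = 1 := by simpa [centeredSingle, sub_eq_zero] using congrFun h i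
  norm_cast at this
  omega

theorem centeredSingle_dotProduct_self (i : Fin n) :
    centeredSingle i ⬝ᵥ centeredSingle i = (n : ℝ) ^ 2 - n := by
  simp only [centeredSingle, dotProduct_sub, sub_dotProduct, dotProduct_single, single_dotProduct,
    Pi.sub_apply, Pi.single_eq_same, Pi.one_apply, one_dotProduct_one, Fintype.card_fin]
  ring

theorem degR_dotProduct_centeredSingle (i : Fin n) :
    degR G ⬝ᵥ centeredSingle i = n * degR G i - volG G := by
  simp [centeredSingle, dotProduct_sub, dotProduct_one, volG, mul_comm]

theorem centeredSingle_dotProduct_adjMatrix_mulVec (i : Fin n) :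
    centeredSingle i ⬝ᵥ (G.adjMatrix ℝ *ᵥ centeredSingle i) = volG G - 2 * n * degR G i := by
  simp only [centeredSingle, mulVec_sub, mulVec_single, adjMatrix_mulVec_one, dotProduct_sub,
    dotProduct_smul, sub_dotProduct, single_dotProduct, col_apply, SimpleGraph.adjMatrix_apply,
    SimpleGraph.irrefl, if_false, one_dotProduct_col_adjMatrix, one_dotProduct_degR,
    MulOpposite.smul_eq_mul_unop, MulOpposite.unop_op]
  ring

def rayleighQuotients : Set ℝ :=
  {r : ℝ | ∃ x : Fin n → ℝ, x ≠ 0 ∧ (∑ i, x i) = 0 ∧ r = (x ⬝ᵥ (modM G *ᵥ x)) / (x ⬝ᵥ x)}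

theorem bddAbove_rayleighQuotients : BddAbove (rayleighQuotients G) := by
  refine ⟨∑ i, ∑ j, |modM G i j|, ?_⟩
  rintro r ⟨x, hx, -, rfl⟩
  rw [div_le_iff₀ (dotProduct_self_pos hx)]
  exact dotProduct_mulVec_le_sum_abs_mul _ x

theorem le_algMod {x : Fin n → ℝ} (hx : x ≠ 0) (hs : ∑ i, x i = 0) :
    x ⬝ᵥ (modM G *ᵥ x) / (x ⬝ᵥ x) ≤ algMod G :=
  le_csSup (bddAbove_rayleighQuotients G) ⟨x, hx, hs, rfl⟩

theorem neg_div_le_algMod (hn : 2 ≤ n) {i : Fin n} (hi : ∀ j, degR G i ≤ degR G j) :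
    -degR G i / (n - 1) ≤ algMod G := by
  have hn' : (2 : ℝ) ≤ n := by exact_mod_cast hn
  have hdeg : 0 ≤ degR G i := Nat.cast_nonneg _
  have hvol : n * degR G i ≤ volG G := by
    simpa [volG] using Finset.sum_le_sum fun j (_ : j ∈ Finset.univ) => hi j
  have hnum : -(n * degR G i) ≤ centeredSingle i ⬝ᵥ (modM G *ᵥ centeredSingle i) := by
    rw [dotProduct_modM_mulVec, centeredSingle_dotProduct_adjMatrix_mulVec,
      degR_dotProduct_centeredSingle]
    have ht := sq_div_le_self (sub_nonneg.mpr hvol) (sub_le_self (volG G) (by positivity))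
    rw [← neg_sub (volG G), neg_sq]
    linarith
  calc -degR G i / (n - 1) = -(n * degR G i) / ((n : ℝ) ^ 2 - n) := by
        field_simp
    _ ≤ _ / (centeredSingle i ⬝ᵥ centeredSingle i) := by
        rw [centeredSingle_dotProduct_self]
        exact div_le_div_of_nonneg_right hnum (by nlinarith)
    _ ≤ algMod G := le_algMod G (centeredSingle_ne_zero hn i) (sum_centeredSingle i)

theorem degR_top (i : Fin n) :
    degR (⊤ : SimpleGraph (Fin n)) i = n - 1 := by
  simp [degR, Nat.cast_pred i.pos]

theorem dotProduct_modM_top_mulVec {x : Fin n → ℝ} (hx : ∑ i, x i = 0) :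
    x ⬝ᵥ (modM ⊤ *ᵥ x) = -(x ⬝ᵥ x) := by
  have hd : degR (⊤ : SimpleGraph (Fin n)) ⬝ᵥ x = 0 := by
    simp [dotProduct, degR_top, ← Finset.mul_sum, hx]
  have hA : (⊤ : SimpleGraph (Fin n)).adjMatrix ℝ *ᵥ x = -x := by
    ext i
    rw [SimpleGraph.adjMatrix_mulVec_apply, SimpleGraph.neighborFinset_top, Pi.neg_apply,
      eq_neg_iff_add_eq_zero, ← Finset.sum_singleton x i, Finset.sum_compl_add_sum, hx]
  rw [dotProduct_modM_mulVec, hd, hA]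
  simp

theorem algMod_top (hn : 2 ≤ n) : algMod (⊤ : SimpleGraph (Fin n)) = -1 := by
  have hq : rayleighQuotients (⊤ : SimpleGraph (Fin n)) = {-1} := by
    have i₀ : Fin n := ⟨0, by omega⟩
    refine (Set.Nonempty.subset_singleton_iff (s := rayleighQuotients ⊤)
      ⟨_, centeredSingle i₀, centeredSingle_ne_zero hn i₀, sum_centeredSingle i₀, rfl⟩).mp ?_
    rintro r ⟨x, hx, hs, rfl⟩
    rw [dotProduct_modM_top_mulVec hs, neg_div, div_self (dotProduct_self_pos hx).ne']
    exact Set.mem_singleton _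
  exact (congrArg sSup hq).trans (csSup_singleton _)

end Modularity

theorem algMod_lower_bound_general (G : SimpleGraph (Fin n)) [DecidableRel G.Adj]
    (hn : 2 ≤ n) :
    -sInf (Set.range (degR G)) / ((n : ℝ) - 1) ≤ algMod G ∧
    (G = ⊤ → algMod G = -sInf (Set.range (degR G)) / ((n : ℝ) - 1)) := by
  have : Nonempty (Fin n) := ⟨⟨0, by omega⟩⟩
  obtain ⟨i, hi⟩ := (Set.range_nonempty (degR G)).csInf_mem (Set.finite_range _)
  have hmin (j : Fin n) : degR G i ≤ degR G j :=
    hi ▸ csInf_le (Set.finite_range _).bddBelow ⟨j, rfl⟩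
  refine ⟨hi ▸ neg_div_le_algMod G hn hmin, ?_⟩
  rintro rfl
  obtain rfl : ‹DecidableRel (⊤ : SimpleGraph (Fin n)).Adj› = SimpleGraph.Top.adjDecidable _ :=
    Subsingleton.elim _ _
  have hn1 : (n : ℝ) - 1 ≠ 0 := by
    have : (2 : ℝ) ≤ n := by exact_mod_cast hn
    linarith
  rw [algMod_top hn, ← hi, degR_top, neg_div, div_self hn1]

/-- For any finite simple connected graph on `n ≥ 2` vertices,
`m(G) ≥ -d_min/(n-1)`, with equality when `G` is a complete graph. -/
theorem algMod_lower_bound (G : SimpleGraph (Fin n)) [DecidableRel G.Adj]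
    (hG : G.Connected) (hn : 2 ≤ n) :
    -sInf (Set.range (degR G)) / ((n : ℝ) - 1) ≤ algMod G ∧
    (G = ⊤ → algMod G = -sInf (Set.range (degR G)) / ((n : ℝ) - 1)) :=
  algMod_lower_bound_general G hn
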